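/- arXiv:1511.03526 — 7 statements merged into one kernel-verified Lean document; each statement's English description precedes it below -/
import Mathlib

section
/- For any A-module M and any indexing set I, the natural map (∏_{i∈I} A) ⊗_A M → ∏_{i∈I} M (sending (a_i) ⊗ m to (a_i m)) is injective. -/
universe u

open TensorProduct

/-- The natural map `(∏_{i ∈ ι} A) ⊗[A] M → ∏_{i ∈ ι} M` sending `(aᵢ) ⊗ m` to `(aᵢ • m)`. -/
noncomputable def piTensorHom (A : Type u) [CommRing A] (ι : Type u) (M : Type u)
    [AddCommGroup M] [Module A M] : ((ι → A) ⊗[A] M) →ₗ[A] (ι → M) :=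
  TensorProduct.lift (LinearMap.mk₂ A (fun a m i => a i • m)
    (fun a a' m => by funext i; simp [add_smul])
    (fun c a m => by funext i; simp [mul_smul])
    (fun a m m' => by funext i; simp [smul_add])
    (fun c a m => by funext i; exact smul_comm _ _ _))

section PiTensorAux

variable (A : Type u) [CommRing A] (ι : Type u)

@[simp] lemma piTensorHom_tmul (M : Type u) [AddCommGroup M] [Module A M]
    (p : ι → A) (m : M) : piTensorHom A ι M (p ⊗ₜ m) = fun i => p i • m := rfl

/-- Naturality of `piTensorHom`. -/
lemma piTensorHom_naturality {N M : Type u} [AddCommGroup N] [Module A N]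
    [AddCommGroup M] [Module A M] (f : N →ₗ[A] M) (x : (ι → A) ⊗[A] N) :
    piTensorHom A ι M (LinearMap.lTensor (ι → A) f x)
      = fun i => f (piTensorHom A ι N x i) := by
  induction x using TensorProduct.induction_on with
  | zero => ext i; simp
  | tmul p n => ext i; simp
  | add x y hx hy => ext i; simp_all [Pi.add_apply]

/-- Relation with `piScalarRight` for finite free modules. -/
lemma piTensorHom_eq_piScalarRight (n : ℕ) (y : (ι → A) ⊗[A] (Fin n → A)) (k : Fin n) (i : ι) :
    TensorProduct.piScalarRight A A (ι → A) (Fin n) y k i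
      = piTensorHom A ι (Fin n → A) y i k := by
  induction y using TensorProduct.induction_on with
  | zero => simp
  | tmul p f => simp [mul_comm]
  | add x y hx hy => simp_all

lemma piTensorHom_finfree_injective (n : ℕ) :
    Function.Injective (piTensorHom A ι (Fin n → A)) := by
  intro x y h
  apply (TensorProduct.piScalarRight A A (ι → A) (Fin n)).injective
  ext k i
  rw [TensorProduct.piScalarRight_apply, TensorProduct.piScalarRight_apply,
    ← TensorProduct.piScalarRight_apply, ← TensorProduct.piScalarRight_apply,
    piTensorHom_eq_piScalarRight, piTensorHom_eq_piScalarRight, h]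

lemma piTensorHom_finfree_surjective (n : ℕ) :
    Function.Surjective (piTensorHom A ι (Fin n → A)) := by
  intro w
  refine ⟨(TensorProduct.piScalarRight A A (ι → A) (Fin n)).symm (fun k i => w i k), ?_⟩
  ext i k
  rw [← piTensorHom_eq_piScalarRight]
  simp

end PiTensorAux

/-- For any `A`-module `M` and any indexing set `ι`, the natural map
`(∏_{i ∈ ι} A) ⊗_A M → ∏_{i ∈ ι} M` is injective. -/

theorem piTensorHom_injective (A : Type u) [CommRing A] [IsNoetherianRing A] (ι : Type u)
    (M : Type u) [AddCommGroup M] [Module A M] :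
    Function.Injective (piTensorHom A ι M) := by
  classical
  rw [injective_iff_map_eq_zero]
  intro x hx
  -- write x as a finite sum of pure tensors and pass to a f.g. submodule
  obtain ⟨s, rfl⟩ := TensorProduct.exists_finset x
  set N : Submodule A M := Submodule.span A (s.image Prod.snd : Set M) with hN
  have hmem : ∀ q ∈ s, q.2 ∈ N := fun q hq =>
    Submodule.subset_span (by simpa using Finset.mem_image_of_mem Prod.snd hq)
  set y : (ι → A) ⊗[A] N := ∑ q ∈ s.attach, q.1.1 ⊗ₜ (⟨q.1.2, hmem q.1 q.2⟩ : N) with hy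
  have hxy : LinearMap.lTensor (ι → A) N.subtype y = ∑ q ∈ s, q.1 ⊗ₜ q.2 := by
    rw [hy, map_sum, ← Finset.sum_attach s (fun q => q.1 ⊗ₜ[A] q.2)]
    rfl
  suffices hy0 : y = 0 by rw [← hxy, hy0, map_zero]
  -- piTensorHom on N kills y
  have hNy : piTensorHom A ι N y = 0 := by
    have h1 := piTensorHom_naturality A ι N.subtype y
    rw [hxy, hx] at h1
    funext i
    refine Subtype.ext ?_
    simpa using (congrFun h1 i).symm
  -- finite presentation of N
  have hNfg : N.FG := ⟨s.image Prod.snd, rfl⟩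
  have hfin : Module.Finite A N := Module.Finite.iff_fg.mpr (by
    simpa using hNfg)
  obtain ⟨n, π, hπ⟩ := Module.Finite.exists_fin' A N
  have hkfin : Module.Finite A (LinearMap.ker π) := Module.Finite.iff_fg.mpr
    (IsNoetherian.noetherian _)
  obtain ⟨m, q, hq⟩ := Module.Finite.exists_fin' A (LinearMap.ker π)
  set j : (Fin m → A) →ₗ[A] (Fin n → A) := (LinearMap.ker π).subtype ∘ₗ q with hj
  -- lift y along π
  obtain ⟨z, hzy⟩ := LinearMap.lTensor_surjective (ι → A) hπ y
  rw [← hzy]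
  have hz : ∀ i, piTensorHom A ι (Fin n → A) z i ∈ LinearMap.ker π := by
    intro i
    have h2 := piTensorHom_naturality A ι π z
    rw [hzy, hNy] at h2
    exact LinearMap.mem_ker.mpr (congrFun h2.symm i)
  -- choose preimages through q
  choose w hw using fun i => hq ⟨piTensorHom A ι (Fin n → A) z i, hz i⟩
  obtain ⟨u, hu⟩ := piTensorHom_finfree_surjective A ι m w
  have hju : LinearMap.lTensor (ι → A) j u = z := by
    apply piTensorHom_finfree_injective A ι n
    rw [piTensorHom_naturality A ι j u]
    funext i
    rw [hu, hj]
    simpa using congrArg Subtype.val (hw i)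
  rw [← hju, ← LinearMap.lTensor_comp_apply]
  have : π ∘ₗ j = 0 := by
    ext v
    simp [hj]
  rw [this]
  simp
end

section
/- A direct sum ⊕_{i∈I} M is a pure submodule of the direct product ∏_{i∈I} M. -/
universe u v

namespace TensorProduct

variable {R : Type*} [CommSemiring R] {ι : Type*} (M N : Type*)
  [AddCommMonoid M] [Module R M] [AddCommMonoid N] [Module R N]

theorem piRightHom_comp_lTensor_lcoeFun [DecidableEq ι] :
    piRightHom R R N (fun _ : ι ↦ M) ∘ₗ (Finsupp.lcoeFun : (ι →₀ M) →ₗ[R] ι → M).lTensor N =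
      Finsupp.lcoeFun ∘ₗ (finsuppRight R R N M ι).toLinearMap := by
  ext n i m j
  by_cases h : i = j <;> simp [h]

/-- `N ⊗ (ι →₀ M) → N ⊗ (ι → M)` is injective: followed by the evaluation map
`N ⊗ (ι → M) → (ι → N ⊗ M)` it becomes the isomorphism `N ⊗ (ι →₀ M) ≃ (ι →₀ N ⊗ M)`
followed by the inclusion `(ι →₀ N ⊗ M) → (ι → N ⊗ M)`. -/
theorem lTensor_lcoeFun_injective :
    Function.Injective ((Finsupp.lcoeFun : (ι →₀ M) →ₗ[R] ι → M).lTensor N) := by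
  classical
  refine Function.Injective.of_comp (f := piRightHom R R N (fun _ : ι ↦ M)) ?_
  rw [← LinearMap.coe_comp, piRightHom_comp_lTensor_lcoeFun]
  exact DFunLike.coe_injective.comp (finsuppRight R R N M ι).injective

end TensorProduct

/-- The direct sum `⊕_{i ∈ ι} M` is a pure submodule of the direct product `∏_{i ∈ ι} M`:
tensoring the canonical inclusion with any module `N` yields an injective map. -/
theorem directSum_pure_in_pi {A : Type u} [CommRing A] (ι : Type v) (M : Type v)
    [AddCommGroup M] [Module A M] :
    ∀ (N : Type v) [AddCommGroup N] [Module A N],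
      Function.Injective
        (LinearMap.lTensor N (Finsupp.lcoeFun : (ι →₀ M) →ₗ[A] (ι → M))) :=
  fun N _ _ ↦ TensorProduct.lTensor_lcoeFun_injective M N
end

section
/- Let (A, 𝔪) be a complete Noetherian local ring. If T is an A-module with 𝔪T = T, then every A-module homomorphism T → ∏_{i∈I} A is zero. -/
universe u v

/-- Let `(A, 𝔪)` be a complete Noetherian local ring. If `T` is an `A`-module with
`𝔪 T = T`, then every `A`-module homomorphism `T → ∏_{i ∈ ι} A` is zero. -/
theorem linearMap_to_pi_eq_zero_of_divisible {A : Type u} [CommRing A] [IsNoetherianRing A]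
    [IsLocalRing A] [IsAdicComplete (IsLocalRing.maximalIdeal A) A]
    {T : Type v} [AddCommGroup T] [Module A T]
    (hT : IsLocalRing.maximalIdeal A • (⊤ : Submodule A T) = ⊤)
    (ι : Type v) (f : T →ₗ[A] (ι → A)) : f = 0 := by
  set m := IsLocalRing.maximalIdeal A
  have hpow : ∀ n : ℕ, (m ^ n) • (⊤ : Submodule A T) = ⊤ := by
    intro n
    induction n with
    | zero => simp
    | succ n ih => rw [pow_succ, mul_comm, mul_smul, ih, hT]
  ext t i
  have hmem : ∀ n : ℕ, f t i ∈ m ^ n := by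
    intro n
    have ht : t ∈ (m ^ n) • (⊤ : Submodule A T) := by rw [hpow n]; trivial
    refine Submodule.smul_induction_on ht ?_ ?_
    · intro a ha x _
      rw [map_smul]
      exact Ideal.mul_mem_right _ _ ha
    · intro x y hx hy
      rw [map_add]
      exact Ideal.add_mem _ hx hy
  have haus : IsHausdorff m A := inferInstance
  have := haus.haus (f t i) (fun n => by
    rw [SModEq.zero]
    simpa [smul_eq_mul, Ideal.mul_top] using hmem n)
  simpa using this
end

section
/- Let A be a commutative ring, I an ideal, and M, N two A-modules. Then there is a natural isomorphism of I-adic completions: lim_k (M ⊗ N)/I^k(M ⊗ N) ≅ lim_k (M̂ ⊗ N̂)/I^k(M̂ ⊗ N̂), where M̂, N̂ denote the I-adic completions of M and N. -/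
/-!
A map of modules whose reductions modulo every `I ^ n` are bijective induces a bijection on
`I`-adic completions. For `I` finitely generated, `M → M̂` is bijective modulo `I ^ n`, because
`I ^ n M̂` is exactly the kernel of `M̂ → M ⧸ I ^ n M`. Reducing modulo `I ^ n` is base change to
`A ⧸ I ^ n`, which commutes with tensor products, so `M ⊗ N → M̂ ⊗ N̂` is bijective modulo
every `I ^ n` as well.
-/

universe u

open TensorProduct

namespace LinearMap

variable {R : Type*} [CommRing R]
variable {M N M₂ N₂ : Type*} [AddCommGroup M] [Module R M] [AddCommGroup N] [Module R N]
  [AddCommGroup M₂] [Module R M₂] [AddCommGroup N₂] [Module R N₂]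

theorem restrictScalars_reduceModIdeal_comp_quotTensorEquivQuotSMul (J : Ideal R)
    (f : M →ₗ[R] N) :
    (f.reduceModIdeal J).restrictScalars R ∘ₗ (quotTensorEquivQuotSMul M J).toLinearMap =
      (quotTensorEquivQuotSMul N J).toLinearMap ∘ₗ (f.baseChange (R ⧸ J)).restrictScalars R := by
  ext
  simp

theorem reduceModIdeal_bijective_iff_baseChange_bijective (J : Ideal R) (f : M →ₗ[R] N) :
    Function.Bijective (f.reduceModIdeal J) ↔ Function.Bijective (f.baseChange (R ⧸ J)) := by
  have h := congrArg DFunLike.coe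
    (restrictScalars_reduceModIdeal_comp_quotTensorEquivQuotSMul J f)
  simp only [coe_comp, LinearEquiv.coe_coe, coe_restrictScalars] at h
  rw [← EquivLike.bijective_comp (quotTensorEquivQuotSMul M J), h, EquivLike.comp_bijective]

variable {A : Type*} [CommRing A] [Algebra R A]

theorem baseChange_map_comp_distribBaseChange_symm (f : M →ₗ[R] M₂) (g : N →ₗ[R] N₂) :
    (map f g).baseChange A ∘ₗ (AlgebraTensorModule.distribBaseChange R A M N).symm.toLinearMap =
      (AlgebraTensorModule.distribBaseChange R A M₂ N₂).symm.toLinearMap ∘ₗ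
        AlgebraTensorModule.map (f.baseChange A) (g.baseChange A) := by
  ext
  simp

theorem baseChange_map_bijective {f : M →ₗ[R] M₂} {g : N →ₗ[R] N₂}
    (hf : Function.Bijective (f.baseChange A)) (hg : Function.Bijective (g.baseChange A)) :
    Function.Bijective ((map f g).baseChange A) := by
  have h := congrArg DFunLike.coe (baseChange_map_comp_distribBaseChange_symm (A := A) f g)
  simp only [coe_comp, LinearEquiv.coe_coe] at h
  rw [← EquivLike.bijective_comp (AlgebraTensorModule.distribBaseChange R A M N).symm, h,
    EquivLike.comp_bijective]
  exact (AlgebraTensorModule.congr (.ofBijective _ hf) (.ofBijective _ hg)).bijective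

theorem reduceModIdeal_map_bijective {J : Ideal R} {f : M →ₗ[R] M₂} {g : N →ₗ[R] N₂}
    (hf : Function.Bijective (f.reduceModIdeal J)) (hg : Function.Bijective (g.reduceModIdeal J)) :
    Function.Bijective ((map f g).reduceModIdeal J) := by
  rw [reduceModIdeal_bijective_iff_baseChange_bijective] at hf hg ⊢
  exact baseChange_map_bijective hf hg

end LinearMap

namespace AdicCompletion

variable {R : Type*} [CommRing R] (I : Ideal R)
variable {M N : Type*} [AddCommGroup M] [Module R M] [AddCommGroup N] [Module R N]

theorem map_bijective_of_reduceModIdeal_bijective {f : M →ₗ[R] N}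
    (hf : ∀ n, Function.Bijective (f.reduceModIdeal (I ^ n))) :
    Function.Bijective (map I f) := by
  refine ⟨fun x y hxy ↦ ext fun n ↦ (hf n).1 ?_, fun y ↦ ?_⟩
  · simpa using congrArg (·.val n) hxy
  let g n := Function.surjInv (hf n).2
  have hg n z : f.reduceModIdeal (I ^ n) (g n z) = z := Function.surjInv_eq (hf n).2 z
  have hcompat {m n : ℕ} (hmn : m ≤ n) :
      transitionMap I M hmn (g n (y.val n)) = g m (y.val m) := (hf m).1 <| by
    have h := DFunLike.congr_fun (transitionMap_comp_reduceModIdeal I f hmn) (g n (y.val n))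
    simp only [LinearMap.comp_apply, LinearMap.coe_restrictScalars, hg] at h
    rw [← h, hg, y.property hmn]
  exact ⟨⟨fun n ↦ g n (y.val n), hcompat⟩, ext fun n ↦ hg n _⟩

variable {I} in
theorem reduceModIdeal_of_bijective (hI : I.FG) (n : ℕ) :
    Function.Bijective ((of I M).reduceModIdeal (I ^ n)) := by
  refine ⟨fun x y hxy ↦ ?_, fun y ↦ ?_⟩
  · obtain ⟨x, rfl⟩ := Submodule.Quotient.mk_surjective _ x
    obtain ⟨y, rfl⟩ := Submodule.Quotient.mk_surjective _ y
    rw [LinearMap.reduceModIdeal_apply, LinearMap.reduceModIdeal_apply, Submodule.Quotient.eq,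
      ← map_sub, pow_smul_top_eq_ker_eval hI, LinearMap.mem_ker, eval_of, Submodule.mkQ_apply,
      Submodule.Quotient.mk_eq_zero] at hxy
    rwa [Submodule.Quotient.eq]
  · obtain ⟨z, rfl⟩ := Submodule.Quotient.mk_surjective _ y
    obtain ⟨x, hx⟩ := Submodule.Quotient.mk_surjective _ (eval I M n z)
    refine ⟨Submodule.Quotient.mk x, ?_⟩
    rw [LinearMap.reduceModIdeal_apply, Submodule.Quotient.eq, pow_smul_top_eq_ker_eval hI,
      LinearMap.mem_ker, map_sub, eval_of, Submodule.mkQ_apply, hx, sub_self]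

end AdicCompletion

/-- Let `A` be a commutative Noetherian ring, `I` an ideal and `M`, `N` two `A`-modules.
The canonical maps `M → M̂`, `N → N̂` induce a natural isomorphism of `I`-adic completions
`(M ⊗ N)^∧ ≅ (M̂ ⊗ N̂)^∧`. -/
theorem adicCompletion_tensor_completion_bijective {A : Type u} [CommRing A]
    [IsNoetherianRing A] (I : Ideal A) (M N : Type u) [AddCommGroup M] [Module A M]
    [AddCommGroup N] [Module A N] :
    Function.Bijective
      (AdicCompletion.map I
        (TensorProduct.map (AdicCompletion.of I M) (AdicCompletion.of I N))) := by
  have hI : I.FG := IsNoetherian.noetherian I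
  refine AdicCompletion.map_bijective_of_reduceModIdeal_bijective I fun n ↦ ?_
  exact LinearMap.reduceModIdeal_map_bijective (AdicCompletion.reduceModIdeal_of_bijective hI n)
    (AdicCompletion.reduceModIdeal_of_bijective hI n)
end

section
/- Let A be a commutative ring and I a finitely generated ideal. For any A-module M, the natural maps A/I^k ⊗ M → A/I^k ⊗ M̂ (induced by completion M → M̂ = lim_j M/I^j M) are isomorphisms for all k, hence the completion of M̂ is isomorphic to M̂ (completion is idempotent on quotients by powers of I). -/
/-!
Tensoring with `A ⧸ I ^ k` is reduction modulo `I ^ k`, so the first claim says that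
`M ⧸ I ^ k M → M̂ ⧸ I ^ k M̂` is bijective. Its left inverse is induced by the projection
`M̂ → M ⧸ I ^ k M`, which is surjective and, for finitely generated `I`, has kernel exactly
`I ^ k M̂` (Stacks 05GG); the same fact makes `M̂` adically complete.
-/

universe u

open AdicCompletion Submodule TensorProduct

section QuotientTensor

variable {R M N : Type*} [CommRing R] [AddCommGroup M] [Module R M] [AddCommGroup N]
  [Module R N] (I : Ideal R) (f : M →ₗ[R] N)

theorem TensorProduct.quotTensorEquivQuotSMul_comp_lTensor :
    (quotTensorEquivQuotSMul N I).toLinearMap ∘ₗ f.lTensor (R ⧸ I) =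
      mapQ _ _ f (smul_top_le_comap_smul_top I f) ∘ₗ
        (quotTensorEquivQuotSMul M I).toLinearMap := by
  refine TensorProduct.ext' fun r x => ?_
  obtain ⟨r, rfl⟩ := Ideal.Quotient.mk_surjective r
  simp [quotTensorEquivQuotSMul_mk_tmul]

theorem LinearMap.lTensor_quotient_bijective_iff :
    Function.Bijective (f.lTensor (R ⧸ I)) ↔
      Function.Bijective (mapQ _ _ f (smul_top_le_comap_smul_top I f)) := by
  rw [← (quotTensorEquivQuotSMul N I).bijective.of_comp_iff',
    ← (quotTensorEquivQuotSMul M I).bijective.of_comp_iff _]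
  exact iff_of_eq congr(Function.Bijective
    $(TensorProduct.quotTensorEquivQuotSMul_comp_lTensor I f))

end QuotientTensor

namespace AdicCompletion

variable {R : Type*} [CommRing R] {I : Ideal R} (M : Type*) [AddCommGroup M] [Module R M]

theorem liftQ_eval_bijective (hI : I.FG) (n : ℕ) :
    Function.Bijective ((I ^ n • ⊤ : Submodule R (AdicCompletion I M)).liftQ (eval I M n)
      (pow_smul_top_le_ker_eval I n)) :=
  ⟨LinearMap.ker_eq_bot.mp (ker_liftQ_eq_bot' _ _ (pow_smul_top_eq_ker_eval hI)),
    LinearMap.range_eq_top.mp <| by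
      rw [range_liftQ, LinearMap.range_eq_top]
      exact eval_surjective I M n⟩

theorem mapQ_of_pow_smul_top_bijective (hI : I.FG) (n : ℕ) :
    Function.Bijective (mapQ (I ^ n • ⊤ : Submodule R M) (I ^ n • ⊤) (of I M)
      (smul_top_le_comap_smul_top _ _)) := by
  rw [← (liftQ_eval_bijective M hI n).of_comp_iff']
  have hid : (I ^ n • ⊤ : Submodule R (AdicCompletion I M)).liftQ (eval I M n)
      (pow_smul_top_le_ker_eval I n) ∘ₗ mapQ _ _ (of I M) (smul_top_le_comap_smul_top _ _) =
      LinearMap.id := by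
    ext x
    simp
  exact iff_of_eq congr(Function.Bijective $hid) |>.mpr Function.bijective_id

end AdicCompletion

theorem tensor_quotient_completion_bijective_and_idempotent_general {A : Type u} [CommRing A]
    (I : Ideal A) (hI : I.FG) (M : Type u) [AddCommGroup M]
    [Module A M] :
    (∀ k : ℕ, Function.Bijective
        (LinearMap.lTensor (A ⧸ I ^ k) (AdicCompletion.of I M))) ∧
    Function.Bijective (AdicCompletion.of I (AdicCompletion I M)) :=
  ⟨fun k => (LinearMap.lTensor_quotient_bijective_iff _ _).mpr
      (mapQ_of_pow_smul_top_bijective M hI k),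
    of_bijective_iff.mpr (isAdicComplete hI)⟩

/-- Let `A` be a commutative Noetherian ring and `I` a finitely generated ideal.  For any
`A`-module `M`, the natural maps `A/I^k ⊗ M → A/I^k ⊗ M̂` induced by the completion map
`M → M̂` are isomorphisms for all `k`, and hence the completion of `M̂` is isomorphic to
`M̂` (completion is idempotent). -/
theorem tensor_quotient_completion_bijective_and_idempotent {A : Type u} [CommRing A]
    [IsNoetherianRing A] (I : Ideal A) (hI : I.FG) (M : Type u) [AddCommGroup M]
    [Module A M] :
    (∀ k : ℕ, Function.Bijective
        (LinearMap.lTensor (A ⧸ I ^ k) (AdicCompletion.of I M))) ∧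
    Function.Bijective (AdicCompletion.of I (AdicCompletion I M)) :=
  tensor_quotient_completion_bijective_and_idempotent_general I hI M
end

section
/- Let A be a complete Noetherian local ring with maximal ideal 𝔪. If N is a pure submodule of ∏_{i∈I} A (a product of copies of A), then for every 𝔪-adically complete A-module M, the natural map N ⊗_A M → (N ⊗_A M)̂ to the 𝔪-adic completion is injective. -/
/-!
The map to the completion is injective exactly when `N ⊗ M` is `𝔪`-adically Hausdorff. Purity
makes `N ⊗ M → M ⊗ ∏ A` injective, and over a Noetherian ring `M ⊗ ∏ A → ∏ M` is injective for
every `M`: it is bijective for finitely presented `M` by right exactness of both sides, and `M` is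
the union of its finite submodules. So `N ⊗ M` embeds into `∏ M`, which is Hausdorff because `M`
is, and a submodule of a Hausdorff module is Hausdorff.
-/

universe u

open TensorProduct IsLocalRing

lemma LinearMap.compLeft_exact {R M₁ M₂ M₃ : Type*} [Semiring R] [AddCommMonoid M₁]
    [AddCommMonoid M₂] [AddCommMonoid M₃] [Module R M₁] [Module R M₂] [Module R M₃]
    {f : M₁ →ₗ[R] M₂} {g : M₂ →ₗ[R] M₃} (h : Function.Exact f g) (ι : Type*) :
    Function.Exact (f.compLeft ι) (g.compLeft ι) := by
  intro y
  constructor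
  · intro hy
    choose x hx using fun i ↦ (h (y i)).1 (congrFun hy i)
    exact ⟨x, funext hx⟩
  · rintro ⟨x, rfl⟩
    exact funext fun i ↦ h.apply_apply_eq_zero (x i)

section PiScalarRight

variable {R : Type*} [CommRing R] (ι : Type*)

lemma piScalarRightHom_comp_rTensor {P Q : Type*} [AddCommGroup P] [AddCommGroup Q]
    [Module R P] [Module R Q] (f : P →ₗ[R] Q) :
    piScalarRightHom R R Q ι ∘ₗ f.rTensor (ι → R) = f.compLeft ι ∘ₗ piScalarRightHom R R P ι := by
  ext p v i
  simp

lemma piScalarRightHom_bijective_of_finite (κ : Type*) [Finite κ] :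
    Function.Bijective (piScalarRightHom R R (κ → R) ι) := by
  classical
  have := Fintype.ofFinite κ
  have hswap : ∀ x, Equiv.piComm (fun _ _ ↦ R) (piScalarRightHom R R (κ → R) ι x) =
      piScalarRight R R (ι → R) κ (TensorProduct.comm R (κ → R) (ι → R) x) := by
    intro x
    induction x with
    | zero => simp only [map_zero]; rfl
    | tmul u v => ext k i; simp [Function.swap, mul_comm]
    | add x y hx hy => simp only [map_add, ← hx, ← hy]; rfl
  rw [← (Equiv.piComm _).bijective.of_comp_iff']
  convert (piScalarRight R R (ι → R) κ).bijective.comp (TensorProduct.comm R _ _).bijective using 1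
  exact funext hswap

lemma piScalarRightHom_bijective_of_finitePresentation (P : Type*) [AddCommGroup P] [Module R P]
    [Module.FinitePresentation R P] : Function.Bijective (piScalarRightHom R R P ι) := by
  obtain ⟨n, m, f, g, hf, hgf⟩ := Module.FinitePresentation.exists_fin' R P
  exact LinearMap.bijective_of_surjective_of_bijective_of_right_exact
    (g.rTensor (ι → R)) (f.rTensor (ι → R)) (g.compLeft ι) (f.compLeft ι)
    (piScalarRightHom R R _ ι) (piScalarRightHom R R _ ι) (piScalarRightHom R R P ι)
    (piScalarRightHom_comp_rTensor ι g).symm (piScalarRightHom_comp_rTensor ι f).symm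
    (rTensor_exact _ hgf hf) (LinearMap.compLeft_exact hgf ι)
    (piScalarRightHom_bijective_of_finite ι _).2 (piScalarRightHom_bijective_of_finite ι _)
    (LinearMap.rTensor_surjective _ hf) hf.comp_left

lemma piScalarRightHom_injective [IsNoetherianRing R] (M : Type*) [AddCommGroup M] [Module R M] :
    Function.Injective (piScalarRightHom R R M ι) := by
  refine (injective_iff_map_eq_zero _).2 fun x hx ↦ ?_
  obtain ⟨M', _, hx'⟩ := exists_finite_submodule_left_of_setFinite {x} (Set.finite_singleton x)
  obtain ⟨x', rfl⟩ := hx' rfl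
  have := Module.finitePresentation_of_finite R M'
  have hcomm := LinearMap.congr_fun (piScalarRightHom_comp_rTensor ι M'.subtype) x'
  have hx'0 : x' = 0 := by
    refine (piScalarRightHom_bijective_of_finitePresentation ι M').1
      (M'.injective_subtype.comp_left ?_)
    rw [map_zero]
    ext i
    simpa [hx] using (congrFun hcomm i).symm
  rw [hx'0, map_zero]

end PiScalarRight

section Hausdorff

variable {R : Type*} [CommRing R] {I : Ideal R}

lemma IsHausdorff.of_injective {M N : Type*} [AddCommGroup M] [Module R M] [AddCommGroup N]
    [Module R N] [IsHausdorff I N] (f : M →ₗ[R] N) (hf : Function.Injective f) :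
    IsHausdorff I M := by
  refine ⟨fun x hx ↦ hf ?_⟩
  rw [map_zero]
  refine IsHausdorff.haus ‹_› (f x) fun n ↦ ?_
  rw [SModEq.zero]
  exact Submodule.smul_top_le_comap_smul_top _ f (SModEq.zero.1 (hx n))

instance IsHausdorff.pi {ι : Type*} {M : ι → Type*} [∀ i, AddCommGroup (M i)]
    [∀ i, Module R (M i)] [∀ i, IsHausdorff I (M i)] : IsHausdorff I (∀ i, M i) := by
  refine ⟨fun x hx ↦ _root_.funext fun i ↦ (‹∀ i, IsHausdorff I (M i)› i).haus (x i) fun n ↦ ?_⟩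
  rw [SModEq.zero]
  exact Submodule.smul_top_le_comap_smul_top _ (LinearMap.proj i) (SModEq.zero.1 (hx n))

end Hausdorff

theorem tensor_completion_injective_of_pure_general {A : Type u} [CommRing A] [IsNoetherianRing A]
    [IsLocalRing A]
    (ι : Type u) (N : Submodule A (ι → A))
    (hpure : ∀ (X : Type u) [AddCommGroup X] [Module A X],
      Function.Injective (LinearMap.lTensor X N.subtype)) :
    ∀ (M : Type u) [AddCommGroup M] [Module A M] [IsAdicComplete (maximalIdeal A) M],
      Function.Injective (AdicCompletion.of (maximalIdeal A) (↥N ⊗[A] M)) := by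
  intro M _ _ _
  have hembed : Function.Injective (piScalarRightHom A A M ι ∘ₗ N.subtype.lTensor M ∘ₗ
      (TensorProduct.comm A N M).toLinearMap) :=
    (piScalarRightHom_injective ι M).comp ((hpure M).comp (TensorProduct.comm A N M).injective)
  have : IsHausdorff (maximalIdeal A) (N ⊗[A] M) := .of_injective _ hembed
  exact AdicCompletion.of_injective _ _

/-- Let `A` be a complete Noetherian local ring with maximal ideal `𝔪`.  If `N` is a pure
submodule of a product `∏_{i ∈ ι} A`, then for every `𝔪`-adically complete `A`-module `M`,
the natural map `N ⊗_A M → (N ⊗_A M)^∧` to the `𝔪`-adic completion is injective. -/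
theorem tensor_completion_injective_of_pure {A : Type u} [CommRing A] [IsNoetherianRing A]
    [IsLocalRing A] [IsAdicComplete (maximalIdeal A) A]
    (ι : Type u) (N : Submodule A (ι → A))
    (hpure : ∀ (X : Type u) [AddCommGroup X] [Module A X],
      Function.Injective (LinearMap.lTensor X N.subtype)) :
    ∀ (M : Type u) [AddCommGroup M] [Module A M] [IsAdicComplete (maximalIdeal A) M],
      Function.Injective (AdicCompletion.of (maximalIdeal A) (↥N ⊗[A] M)) :=
  tensor_completion_injective_of_pure_general ι N hpure
end

section
/- Let (A, 𝔪) be a Noetherian local ring and P a projective A-module. Then for every 𝔪-adically complete A-module M, the natural map P ⊗_A M → (P ⊗_A M)̂ to the 𝔪-adic completion is injective. -/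
universe u

open TensorProduct IsLocalRing

/-- Image of an element of `I ^ n • ⊤` under a linear map lies in `I ^ n • ⊤`. -/
lemma apply_mem_smul_top {A : Type u} [CommRing A] {N L : Type u} [AddCommGroup N]
    [Module A N] [AddCommGroup L] [Module A L] (f : N →ₗ[A] L) (I : Ideal A) (n : ℕ)
    {x : N} (hx : x ∈ (I ^ n • ⊤ : Submodule A N)) :
    f x ∈ (I ^ n • ⊤ : Submodule A L) := by
  have : f x ∈ Submodule.map f (I ^ n • ⊤ : Submodule A N) := Submodule.mem_map_of_mem hx
  rw [Submodule.map_smul''] at this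
  exact Submodule.smul_mono le_rfl le_top this

/-- Hausdorffness descends along injective linear maps. -/
lemma isHausdorff_of_injective {A : Type u} [CommRing A] {N L : Type u} [AddCommGroup N]
    [Module A N] [AddCommGroup L] [Module A L] (f : N →ₗ[A] L) (hf : Function.Injective f)
    (I : Ideal A) [IsHausdorff I L] : IsHausdorff I N := by
  constructor
  intro x hx
  have : f x = 0 := by
    refine IsHausdorff.haus (inferInstance : IsHausdorff I L) (f x) fun n => ?_
    have := (hx n)
    rw [SModEq.zero] at this ⊢
    exact apply_mem_smul_top f I n this
  exact hf (by simpa using this)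

/-- A pi-type of Hausdorff modules is Hausdorff. -/
lemma isHausdorff_pi {A : Type u} [CommRing A] (I : Ideal A) {ι : Type u} (M : Type u)
    [AddCommGroup M] [Module A M] [IsHausdorff I M] : IsHausdorff I (ι → M) := by
  constructor
  intro x hx
  funext i
  refine IsHausdorff.haus (inferInstance : IsHausdorff I M) (x i) fun n => ?_
  have := (hx n)
  rw [SModEq.zero] at this ⊢
  exact apply_mem_smul_top (LinearMap.proj i) I n this

/-- Let `(A, 𝔪)` be a Noetherian local ring and `P` a projective `A`-module.  Then for
every `𝔪`-adically complete `A`-module `M`, the natural map `P ⊗_A M → (P ⊗_A M)^∧` to the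
`𝔪`-adic completion is injective. -/
theorem projective_tensor_completion_injective {A : Type u} [CommRing A]
    [IsNoetherianRing A] [IsLocalRing A]
    (P : Type u) [AddCommGroup P] [Module A P] [Module.Projective A P]
    (M : Type u) [AddCommGroup M] [Module A M] [IsAdicComplete (maximalIdeal A) M] :
    Function.Injective (AdicCompletion.of (maximalIdeal A) (P ⊗[A] M)) := by
  classical
  set I := maximalIdeal A
  -- split injection from projectivity
  obtain ⟨s, hs⟩ := Module.projective_def'.mp (inferInstance : Module.Projective A P)
  have hstinj : Function.Injective (s.rTensor M) := by
    have hli : Function.LeftInverse ((Finsupp.linearCombination A id).rTensor M)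
        (s.rTensor M) := by
      intro x
      rw [← LinearMap.comp_apply, ← LinearMap.rTensor_comp]
      rw [hs, LinearMap.rTensor_id, LinearMap.id_apply]
    exact hli.injective
  -- compose with finsuppScalarLeft and coercion to functions
  let e := TensorProduct.finsuppScalarLeft A M P
  let g : (P ⊗[A] M) →ₗ[A] (P → M) :=
    (Finsupp.lcoeFun.comp e.toLinearMap).comp (s.rTensor M)
  have hg : Function.Injective g := by
    intro a b hab
    simp only [g, LinearMap.comp_apply, Finsupp.lcoeFun_apply] at hab
    exact hstinj (e.injective (DFunLike.coe_injective hab))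
  have : IsHausdorff I (P → M) := isHausdorff_pi I M
  have hH : IsHausdorff I (P ⊗[A] M) := isHausdorff_of_injective g hg I
  intro x y hxy
  rw [← sub_eq_zero, ← map_sub] at hxy
  rw [← sub_eq_zero]
  refine IsHausdorff.haus hH (x - y) fun n => ?_
  rw [SModEq.zero]
  have h0 : Submodule.mkQ (I ^ n • ⊤ : Submodule A (P ⊗[A] M)) (x - y) = 0 := by
    rw [← AdicCompletion.of_apply, hxy]
    rfl
  rwa [Submodule.mkQ_apply, Submodule.Quotient.mk_eq_zero] at h0
end
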